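/- arXiv:2011.14074 — 5 statements merged into one kernel-verified Lean document; each statement's English description precedes it below -/
import Mathlib

section
/- If a graph G is strongly self-embeddable (i.e., for every vertex v, G embeds into G − v), then for every finite set V of vertices of G, the graph G − V contains a subgraph isomorphic to G. -/
open SimpleGraph

/-- `G` embeds into `H`: an injective graph homomorphism (not necessarily induced). -/
def EmbedsIn {α β : Type*} (G : SimpleGraph α) (H : SimpleGraph β) : Prop :=
  ∃ f : G →g H, Function.Injective f

/-- `G` is self-embeddable: it admits an injective adjacency-preserving self-map whose
image, as a subgraph, is a proper subgraph (strictly smaller edge set). -/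
def SelfEmbeddable {α : Type*} (G : SimpleGraph α) : Prop :=
  ∃ f : G →g G, Function.Injective f ∧ Sym2.map f '' G.edgeSet ⊂ G.edgeSet

/-- `G` is strongly self-embeddable: `G` embeds into `G - v` for every vertex `v`. -/
def StronglySelfEmbeddable {α : Type*} (G : SimpleGraph α) : Prop :=
  ∀ v : α, EmbedsIn G (G.induce ({v}ᶜ : Set α))

/-- The subgraph of `F` consisting of the edges with color `b` under coloring `c`. -/
def colorSubgraph {α : Type*} (F : SimpleGraph α) (c : Sym2 α → Bool) (b : Bool) :
    SimpleGraph α where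
  Adj x y := F.Adj x y ∧ c s(x, y) = b
  symm := by
    constructor
    intro x y h
    exact ⟨h.1.symm, by rw [Sym2.eq_swap]; exact h.2⟩
  loopless := by constructor; intro x h; exact F.irrefl h.1

/-- `F → (G, H)` : every red-blue coloring of the edges of `F` yields a red copy of `G`
or a blue copy of `H` (here `true` = red, `false` = blue). -/
def Arrows {α β γ : Type*} (F : SimpleGraph α) (G : SimpleGraph β) (H : SimpleGraph γ) : Prop :=
  ∀ c : Sym2 α → Bool,
    EmbedsIn G (colorSubgraph F c true) ∨ EmbedsIn H (colorSubgraph F c false)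

/-- `F` is `(G,H)`-minimal: it arrows `(G,H)` but no proper subgraph of it does. -/
def RamseyMinimal {α β γ : Type*} (F : SimpleGraph α) (G : SimpleGraph β)
    (H : SimpleGraph γ) : Prop :=
  Arrows F G H ∧ ∀ F' : SimpleGraph α, F' < F → ¬ Arrows F' G H

/-- `G` has no isolated vertices. -/
def NoIsolated {α : Type*} (G : SimpleGraph α) : Prop := ∀ v, ∃ w, G.Adj v w

/-- The single-edge graph `K₂`. -/
def K2 : SimpleGraph (Fin 2) := ⊤

/-- The matching `nK₂` with `n` pairwise disjoint edges. -/
def Matching (n : ℕ) : SimpleGraph (Fin n × Fin 2) where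
  Adj a b := a.1 = b.1 ∧ a.2 ≠ b.2
  symm := by constructor; intro a b h; exact ⟨h.1.symm, h.2.symm⟩
  loopless := by constructor; intro a h; exact h.2 rfl

/-- The disjoint union `nG` of `n` copies of `G`. -/
def nCopies {V : Type*} (n : ℕ) (G : SimpleGraph V) : SimpleGraph (Fin n × V) where
  Adj a b := a.1 = b.1 ∧ G.Adj a.2 b.2
  symm := by constructor; intro a b h; exact ⟨h.1.symm, h.2.symm⟩
  loopless := by constructor; intro a h; exact G.irrefl h.2

/-- The infinite star `S_∞ = K_{1,∞}`, with center `none`. -/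
def InfStar : SimpleGraph (Option ℕ) := SimpleGraph.fromRel (fun a _ => a = none)

/-- The finite star `K_{1,n}`, with center `none`. -/
def StarN (n : ℕ) : SimpleGraph (Option (Fin n)) := SimpleGraph.fromRel (fun a _ => a = none)

/-- The ray `P_∞` (one-way infinite path) on `ℕ`. -/
def Ray : SimpleGraph ℕ := SimpleGraph.fromRel (fun a b => b = a + 1)

/-- The `k`-ray `P_{k∞}`: `k` rays glued at a common endpoint `none`. -/
def kRay (k : ℕ) : SimpleGraph (Option (Fin k × ℕ)) :=
  SimpleGraph.fromRel (fun a b =>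
    (a = none ∧ ∃ i, b = some (i, 0)) ∨ (∃ i n, a = some (i, n) ∧ b = some (i, n + 1)))

theorem embedsIn_induce_iff {α β : Type*} {G : SimpleGraph α} {H : SimpleGraph β} {s : Set β} :
    EmbedsIn G (H.induce s) ↔ ∃ f : G →g H, Function.Injective f ∧ Set.range f ⊆ s := by
  constructor
  · rintro ⟨f, hf⟩
    exact ⟨(Embedding.induce s).toHom.comp f, Subtype.val_injective.comp hf,
      Set.range_subset_iff.2 fun v => (f v).2⟩
  · rintro ⟨f, hf, hfs⟩
    exact ⟨⟨fun v => ⟨f v, hfs ⟨v, rfl⟩⟩, f.map_adj⟩,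
      fun v w hvw => hf (congrArg Subtype.val hvw)⟩

/-- Removing one vertex at a time: if `f` avoids `S` and `a = f b`, precompose `f` with a
self-embedding avoiding `b`; its range shrinks inside that of `f` and loses `a`. -/
theorem StronglySelfEmbeddable.exists_injective_hom_range_subset_compl {α : Type*}
    {G : SimpleGraph α} (hG : StronglySelfEmbeddable G) {S : Set α} (hS : S.Finite) :
    ∃ f : G →g G, Function.Injective f ∧ Set.range f ⊆ Sᶜ := by
  induction S, hS using Set.Finite.induction_on with
  | empty => exact ⟨Hom.id, Function.injective_id, by simp⟩
  | @insert a S _ _ ih =>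
    obtain ⟨f, hf, hfS⟩ := ih
    by_cases ha : a ∈ Set.range f
    · obtain ⟨b, rfl⟩ := ha
      obtain ⟨g, hg, hgb⟩ := embedsIn_induce_iff.1 (hG b)
      refine ⟨f.comp g, hf.comp hg, Set.range_subset_iff.2 fun v => ?_⟩
      simp only [Set.mem_compl_iff, Set.mem_insert_iff, not_or]
      exact ⟨hf.ne (hgb ⟨v, rfl⟩), hfS ⟨g v, rfl⟩⟩
    · refine ⟨f, hf, fun x hx => ?_⟩
      simp only [Set.mem_compl_iff, Set.mem_insert_iff, not_or]
      exact ⟨fun hxa => ha (hxa ▸ hx), hfS hx⟩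

/-- If `G` is strongly self-embeddable, then `G - V` contains a copy of `G` for every
finite vertex set `V`. -/
theorem stmt0 {V : Type} (G : SimpleGraph V) (h : StronglySelfEmbeddable G) :
    ∀ S : Set V, S.Finite → EmbedsIn G (G.induce Sᶜ) := fun _ hS =>
  embedsIn_induce_iff.2 (h.exists_injective_hom_range_subset_compl hS)
end

section
/- If a graph G is strongly self-embeddable, then for every finite set E of edges of G, the graph G − E contains a subgraph isomorphic to G. -/
open SimpleGraph

/-! Iterating the embeddings `G → G - v` gives, for any finite vertex set `S`, an embedding
of `G` into itself whose image misses `S`: if the current image contains `a = f u`, precompose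
`f` with an embedding missing `u`. Taking `S` to be the endpoints of `E`, no edge of the image
lies in `E`. -/

section

variable {V : Type*} {G : SimpleGraph V}

theorem StronglySelfEmbeddable.exists_injective_hom_forall_ne
    (h : StronglySelfEmbeddable G) (v : V) :
    ∃ f : G →g G, Function.Injective f ∧ ∀ x, f x ≠ v := by
  obtain ⟨f, hf⟩ := h v
  exact ⟨(Embedding.induce _).toHom.comp f, Subtype.val_injective.comp hf, fun x => (f x).2⟩

theorem StronglySelfEmbeddable.exists_injective_hom_forall_notMem_of_finite
    (h : StronglySelfEmbeddable G) {S : Set V} (hS : S.Finite) :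
    ∃ f : G →g G, Function.Injective f ∧ ∀ x, f x ∉ S := by
  induction S, hS using Set.Finite.induction_on with
  | empty => exact ⟨Hom.id, Function.injective_id, fun _ => Set.notMem_empty _⟩
  | @insert a S _ _ ih =>
    obtain ⟨f, hf_inj, hf_S⟩ := ih
    by_cases ha : a ∈ Set.range f
    · obtain ⟨u, rfl⟩ := ha
      obtain ⟨g, hg_inj, hg_u⟩ := h.exists_injective_hom_forall_ne u
      refine ⟨f.comp g, hf_inj.comp hg_inj, fun x => ?_⟩
      simp only [Set.mem_insert_iff, not_or]
      exact ⟨fun hx => hg_u x (hf_inj hx), hf_S _⟩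
    · refine ⟨f, hf_inj, fun x => ?_⟩
      simp only [Set.mem_insert_iff, not_or]
      exact ⟨fun hx => ha ⟨x, hx⟩, hf_S x⟩

theorem embedsIn_deleteEdges_of_injective_hom {W : Type*} {H : SimpleGraph W} {E : Set (Sym2 W)}
    (f : G →g H) (hf_inj : Function.Injective f) (hf_E : ∀ x, ∀ e ∈ E, f x ∉ e) :
    EmbedsIn G (H.deleteEdges E) :=
  ⟨⟨f, fun hxy => (deleteEdges_adj ..).2
    ⟨f.map_adj hxy, fun he => hf_E _ _ he (Sym2.mem_mk_left _ _)⟩⟩, hf_inj⟩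

end

/-- If `G` is strongly self-embeddable, then `G - E` contains a copy of `G` for every
finite edge set `E`. -/
theorem stmt1 {V : Type} (G : SimpleGraph V) (h : StronglySelfEmbeddable G) :
    ∀ E : Set (Sym2 V), E.Finite → EmbedsIn G (G.deleteEdges E) := by
  classical
  intro E hE
  obtain ⟨f, hf_inj, hf_avoid⟩ := h.exists_injective_hom_forall_notMem_of_finite
    (hE.biUnion fun e _ => e.toFinset.finite_toSet)
  exact embedsIn_deleteEdges_of_injective_hom f hf_inj fun x e he hx =>
    hf_avoid x (Set.mem_biUnion he (Sym2.mem_toFinset.2 hx))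
end

section
/- For any graph G (with no isolated vertices), there exists a (G,K₂)-minimal graph if and only if G is not self-embeddable; moreover, if G is not self-embeddable, then G itself is the unique (G,K₂)-minimal graph up to isomorphism. -/
open SimpleGraph

/-!
A graph arrows `(G, K₂)` exactly when it contains a copy of `G`: colour everything red. Hence a
`(G, K₂)`-minimal graph `F` is the image `G.map f` of some embedding of vertex types, since that
image lies in `F` and still contains `G`. If `G` is self-embeddable via `g`, then
`G.map (f ∘ g) < G.map f = F` contains `G` as well, contradicting minimality; if it is not, no
proper subgraph of `G` contains `G`. Finally `F = G.map f` has no isolated vertices only if `f` is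
onto, and then `f` is an isomorphism `G ≃g F`.
-/

namespace SimpleGraph

variable {V W : Type*} {G : SimpleGraph V} {F : SimpleGraph W}

theorem embedsIn_iff_isContained : EmbedsIn G F ↔ G ⊑ F :=
  ⟨fun ⟨f, hf⟩ => ⟨f.toCopy hf⟩, fun ⟨f⟩ => ⟨f.toHom, f.injective⟩⟩

theorem isContained_iff_exists_map_le : G ⊑ F ↔ ∃ f : V ↪ W, G.map f ≤ F := by
  simp only [isContained_iff_exists_le_comap, map_le_iff_le_comap]

theorem embedsIn_K2_iff : EmbedsIn K2 F ↔ F ≠ ⊥ := by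
  rw [embedsIn_iff_isContained, Ne, ← cliqueFree_two, cliqueFree_iff, not_isEmpty_iff]
  rfl

theorem colorSubgraph_sup (F : SimpleGraph W) (c : Sym2 W → Bool) :
    colorSubgraph F c true ⊔ colorSubgraph F c false = F := by
  ext x y
  simp only [sup_adj, colorSubgraph, ← and_or_left]
  cases c s(x, y) <;> simp

theorem arrows_K2_iff : Arrows F G K2 ↔ G ⊑ F := by
  refine ⟨fun h => ?_, fun h c => ?_⟩
  · have hblue : colorSubgraph F (fun _ => true) false = ⊥ := by
      ext; simp [colorSubgraph]
    rcases h fun _ => true with hred | hK2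
    · exact (embedsIn_iff_isContained.1 hred).mono_right fun _ _ h => h.1
    · exact absurd hblue (embedsIn_K2_iff.1 hK2)
  · by_cases hblue : colorSubgraph F c false = ⊥
    · left
      rw [embedsIn_iff_isContained]
      simpa [hblue] using h.trans_le (colorSubgraph_sup F c).ge
    · exact .inr (embedsIn_K2_iff.2 hblue)

theorem ramseyMinimal_K2_iff :
    RamseyMinimal F G K2 ↔ G ⊑ F ∧ ∀ F' : SimpleGraph W, F' < F → ¬ G ⊑ F' := by
  simp only [RamseyMinimal, arrows_K2_iff]

theorem selfEmbeddable_iff_exists_map_lt : SelfEmbeddable G ↔ ∃ f : V ↪ V, G.map f < G := by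
  simp only [SelfEmbeddable, ← edgeSet_ssubset_edgeSet, edgeSet_map]
  refine ⟨fun ⟨f, hf, hlt⟩ => ⟨⟨f, hf⟩, hlt⟩, fun ⟨f, hlt⟩ => ?_⟩
  have hle : G.map f ≤ G := by
    rw [← edgeSet_subset_edgeSet, edgeSet_map]
    exact hlt.le
  exact ⟨⟨f, fun h => hle (map_adj_apply.2 h)⟩, f.injective, hlt⟩

theorem RamseyMinimal.exists_map_eq (h : RamseyMinimal F G K2) : ∃ f : V ↪ W, G.map f = F := by
  rw [ramseyMinimal_K2_iff] at h
  obtain ⟨f, hle⟩ := isContained_iff_exists_map_le.1 h.1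
  exact ⟨f, hle.eq_of_not_lt fun hlt => h.2 _ hlt (Embedding.map f G).isContained⟩

theorem ramseyMinimal_K2_self (h : ¬ SelfEmbeddable G) : RamseyMinimal G G K2 := by
  refine ramseyMinimal_K2_iff.2 ⟨.rfl, fun F' hlt hG => h ?_⟩
  obtain ⟨f, hle⟩ := isContained_iff_exists_map_le.1 hG
  exact selfEmbeddable_iff_exists_map_lt.2 ⟨f, hle.trans_lt hlt⟩

theorem not_ramseyMinimal_K2_of_selfEmbeddable (h : SelfEmbeddable G) :
    ¬ RamseyMinimal F G K2 := by
  intro hF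
  obtain ⟨g, hg⟩ := selfEmbeddable_iff_exists_map_lt.1 h
  obtain ⟨f, rfl⟩ := hF.exists_map_eq
  have hlt : G.map (f ∘ g) < G.map f := by
    simpa using (map_monotone f).strictMono_of_injective (map_injective f) hg
  exact (ramseyMinimal_K2_iff.1 hF).2 _ hlt (Embedding.map (g.trans f) G).isContained

theorem RamseyMinimal.nonempty_iso (hF : NoIsolated F) (h : RamseyMinimal F G K2) :
    Nonempty (G ≃g F) := by
  obtain ⟨f, rfl⟩ := h.exists_map_eq
  have hsurj : Function.Surjective f := fun w => by
    obtain ⟨_, hw⟩ := hF w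
    obtain ⟨v, -, -, hv, -⟩ := (map_adj f G w _).1 hw
    exact ⟨v, hv⟩
  exact ⟨Iso.map (Equiv.ofBijective f ⟨f.injective, hsurj⟩) G⟩

end SimpleGraph

theorem stmt9_general {V : Type} (G : SimpleGraph V) :
    ((∃ (W : Type) (F : SimpleGraph W), RamseyMinimal F G K2) ↔ ¬ SelfEmbeddable G) ∧
    (¬ SelfEmbeddable G →
      RamseyMinimal G G K2 ∧
      ∀ (W : Type) (F : SimpleGraph W), NoIsolated F → RamseyMinimal F G K2 →
        Nonempty (G ≃g F)) :=
  ⟨⟨fun ⟨_, _, hF⟩ hG => not_ramseyMinimal_K2_of_selfEmbeddable hG hF,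
      fun hG => ⟨V, G, ramseyMinimal_K2_self hG⟩⟩,
    fun hG => ⟨ramseyMinimal_K2_self hG, fun _ _ hF hmin => hmin.nonempty_iso hF⟩⟩

/-- A `(G,K₂)`-minimal graph exists iff `G` is not self-embeddable; in that case `G`
itself is `(G,K₂)`-minimal and is the unique minimal graph up to isomorphism. -/
theorem stmt9 {V : Type} (G : SimpleGraph V) (hni : NoIsolated G) :
    ((∃ (W : Type) (F : SimpleGraph W), RamseyMinimal F G K2) ↔ ¬ SelfEmbeddable G) ∧
    (¬ SelfEmbeddable G →
      RamseyMinimal G G K2 ∧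
      ∀ (W : Type) (F : SimpleGraph W), NoIsolated F → RamseyMinimal F G K2 →
        Nonempty (G ≃g F)) :=
  stmt9_general G
end

section
/- Let G and H be graphs with H ≠ K₂ (H has at least two edges). If G → (G,H), then there is no (G,H)-minimal graph. -/
/-!
Since `G → (G,H)`, every graph containing a copy of `G` arrows `(G,H)`, so a `(G,H)`-minimal
graph `F` has no proper subgraph containing `G`. Colour one edge `e` of `F` blue and all others
red. The blue graph has a single edge, too few for `H`, so the red graph `F - e` contains `G`;
this contradicts minimality. That `F` has an edge at all follows from the all-red colouring,
which must contain a red copy of `G`, and `G` has an edge.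
-/

open SimpleGraph

theorem EmbedsIn.trans {α β γ : Type*} {A : SimpleGraph α} {B : SimpleGraph β}
    {C : SimpleGraph γ} (hAB : EmbedsIn A B) (hBC : EmbedsIn B C) : EmbedsIn A C := by
  obtain ⟨f, hf⟩ := hAB
  obtain ⟨g, hg⟩ := hBC
  exact ⟨g.comp f, hg.comp hf⟩

theorem EmbedsIn.edgeSet_nonempty {α β : Type*} {G : SimpleGraph α} {F : SimpleGraph β}
    (h : EmbedsIn G F) (hG : G.edgeSet.Nonempty) : F.edgeSet.Nonempty := by
  obtain ⟨f, -⟩ := h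
  obtain ⟨e, he⟩ := hG
  exact ⟨e.map f, f.map_mem_edgeSet he⟩

theorem EmbedsIn.edgeSet_subsingleton {α β : Type*} {G : SimpleGraph α} {F : SimpleGraph β}
    (h : EmbedsIn G F) (hF : F.edgeSet.Subsingleton) : G.edgeSet.Subsingleton := by
  obtain ⟨f, hf⟩ := h
  refine Set.subsingleton_of_image (Sym2.map.injective hf) _ (hF.anti ?_)
  rintro _ ⟨e, he, rfl⟩
  exact f.map_mem_edgeSet he

theorem NoIsolated.edgeSet_nonempty {α : Type*} [Nonempty α] {G : SimpleGraph α}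
    (hG : NoIsolated G) : G.edgeSet.Nonempty := by
  obtain ⟨v⟩ := ‹Nonempty α›
  obtain ⟨w, hvw⟩ := hG v
  exact ⟨s(v, w), hvw⟩

section colorSubgraph

variable {α : Type*} {F : SimpleGraph α} {c : Sym2 α → Bool} {b : Bool}

theorem mem_edgeSet_colorSubgraph {e : Sym2 α} :
    e ∈ (colorSubgraph F c b).edgeSet ↔ e ∈ F.edgeSet ∧ c e = b := by
  induction e using Sym2.ind with
  | _ x y => rfl

theorem colorSubgraph_lt {e : Sym2 α} (he : e ∈ F.edgeSet) (hc : c e ≠ b) :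
    colorSubgraph F c b < F := by
  rw [← edgeSet_ssubset_edgeSet, Set.ssubset_iff_of_subset]
  · exact ⟨e, he, fun h => hc (mem_edgeSet_colorSubgraph.mp h).2⟩
  · exact fun e h => (mem_edgeSet_colorSubgraph.mp h).1

theorem edgeSet_colorSubgraph_subsingleton (hc : {e | c e = b}.Subsingleton) :
    (colorSubgraph F c b).edgeSet.Subsingleton :=
  hc.anti fun _ h => (mem_edgeSet_colorSubgraph.mp h).2

theorem EmbedsIn.colorSubgraph_comap {β : Type*} {F₀ : SimpleGraph β} (f : F₀ →g F)
    (hf : Function.Injective f) :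
    EmbedsIn (colorSubgraph F₀ (c ∘ Sym2.map f) b) (colorSubgraph F c b) :=
  ⟨⟨f, fun h => ⟨f.map_rel h.1, h.2⟩⟩, hf⟩

end colorSubgraph

theorem Arrows.of_embedsIn {α α₀ β γ : Type*} {F : SimpleGraph α} {F₀ : SimpleGraph α₀}
    {G : SimpleGraph β} {H : SimpleGraph γ} (harr : Arrows F₀ G H) (h : EmbedsIn F₀ F) :
    Arrows F G H := by
  obtain ⟨f, hf⟩ := h
  intro c
  exact (harr (c ∘ Sym2.map f)).imp (·.trans (.colorSubgraph_comap f hf))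
    (·.trans (.colorSubgraph_comap f hf))

theorem Arrows.embedsIn_red {α β γ : Type*} {F : SimpleGraph α} {G : SimpleGraph β}
    {H : SimpleGraph γ} (harr : Arrows F G H) (hH : ¬ H.edgeSet.Subsingleton)
    {c : Sym2 α → Bool} (hc : {e | c e = false}.Subsingleton) :
    EmbedsIn G (colorSubgraph F c true) :=
  (harr c).resolve_right fun h =>
    hH (h.edgeSet_subsingleton (edgeSet_colorSubgraph_subsingleton hc))

theorem RamseyMinimal.not_embedsIn_of_lt {α β γ : Type*} {F F' : SimpleGraph α}
    {G : SimpleGraph β} {H : SimpleGraph γ} (hF : RamseyMinimal F G H) (harr : Arrows G G H)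
    (hlt : F' < F) : ¬ EmbedsIn G F' :=
  fun h => hF.2 F' hlt (harr.of_embedsIn h)

/-- If `H ≠ K₂` (i.e. `H` has at least two edges) and `G → (G,H)`, then there is no
`(G,H)`-minimal graph. -/
theorem stmt10 {β γ : Type} [Nonempty β] (G : SimpleGraph β) (H : SimpleGraph γ)
    (hG : NoIsolated G)
    (hH : ∃ e₁ e₂ : Sym2 γ, e₁ ∈ H.edgeSet ∧ e₂ ∈ H.edgeSet ∧ e₁ ≠ e₂)
    (harr : Arrows G G H) :
    ∀ (W : Type) (F : SimpleGraph W), ¬ RamseyMinimal F G H := by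
  classical
  intro W F hF
  have hH' : ¬ H.edgeSet.Subsingleton := by
    obtain ⟨e₁, e₂, he₁, he₂, hne⟩ := hH
    exact fun h => hne (h he₁ he₂)
  obtain ⟨e, he⟩ : F.edgeSet.Nonempty := by
    have hred := hF.1.embedsIn_red hH' (c := fun _ => true) (by simp)
    exact (hred.edgeSet_nonempty hG.edgeSet_nonempty).mono
      fun _ h => (mem_edgeSet_colorSubgraph.mp h).1
  let c : Sym2 W → Bool := fun e' => decide (e' ≠ e)
  have hblue : {e' | c e' = false} = {e} := by ext; simp [c]
  exact hF.not_embedsIn_of_lt harr (colorSubgraph_lt he (by simp [c]))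
    (hF.1.embedsIn_red hH' (hblue ▸ Set.subsingleton_singleton))
end

section
/- For every n ≥ 1, there is no (S_∞, nK₂)-minimal graph, where S_∞ is the infinite star and nK₂ is a matching of n edges. -/
open SimpleGraph

/-!
`F → (S_∞, nK₂)` holds exactly when `F` has `n` vertices of infinite degree. If one of them has
infinitely many red edges it is the centre of a red `S_∞`; otherwise each has infinitely many blue
edges, and a blue `nK₂` is picked greedily. Conversely, colouring red precisely the edges between
vertices of finite degree leaves no red `S_∞`, and every blue edge has an end of infinite degree.
Deleting one edge at a vertex of infinite degree preserves the criterion, so no arrowing graph is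
minimal.
-/

open Function

theorem exists_injective_forall_mem_diff {W : Type*} {m : ℕ} (B : Fin m → Set W)
    (hB : ∀ i, (B i).Infinite) {A : Set W} (hA : A.Finite) :
    ∃ w : Fin m → W, Injective w ∧ ∀ i, w i ∈ B i \ A := by
  induction m with
  | zero => exact ⟨finZeroElim, fun i => i.elim0, fun i => i.elim0⟩
  | succ m ih =>
    obtain ⟨w, hw, hwB⟩ := ih (fun i => B i.succ) (fun i => hB i.succ)
    obtain ⟨x, hxB, hx⟩ := ((hB 0).sdiff (hA.union (Set.finite_range w))).nonempty
    rw [Set.mem_union, not_or] at hx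
    refine ⟨Fin.cons x w, Fin.cons_injective_iff.mpr ⟨hx.2, hw⟩, Fin.cases ⟨hxB, hx.1⟩ hwB⟩

theorem infStar_adj_none_some (k : ℕ) : InfStar.Adj none (some k) := by
  simp [InfStar]

theorem embedsIn_infStar_iff {V : Type*} {G : SimpleGraph V} :
    EmbedsIn InfStar G ↔ ∃ v, (G.neighborSet v).Infinite := by
  constructor
  · rintro ⟨f, hf⟩
    have hleaves := Set.infinite_range_of_injective (hf.comp (Option.some_injective ℕ))
    refine ⟨f none, hleaves.mono ?_⟩
    rintro _ ⟨k, rfl⟩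
    exact f.map_adj (infStar_adj_none_some k)
  · rintro ⟨v, hv⟩
    let g : ℕ ↪ G.neighborSet v := hv.natEmbedding
    have hg : ∀ k, G.Adj v (g k) := fun k => (g k).2
    refine ⟨⟨fun a => a.elim v fun k => g k, ?_⟩, Option.injective_iff.mpr ⟨?_, ?_⟩⟩
    · rintro (_ | a) (_ | b) hab <;> simp_all [InfStar, G.adj_comm]
    · exact Subtype.val_injective.comp g.injective
    · rintro ⟨k, hk⟩
      exact (hg k).ne hk.symm

theorem embedsIn_matching_of_neighborSet_infinite {V : Type*} {G : SimpleGraph V} {n : ℕ}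
    (v : Fin n → V) (hv : Injective v) (hinf : ∀ i, (G.neighborSet (v i)).Infinite) :
    EmbedsIn (Matching n) G := by
  obtain ⟨w, hw, hwN⟩ := exists_injective_forall_mem_diff _ hinf (Set.finite_range v)
  have hvw : ∀ i j, v i ≠ w j := fun i j h => (hwN j).2 ⟨i, h⟩
  refine ⟨⟨fun p => ![v p.1, w p.1] p.2, ?_⟩, ?_⟩
  · rintro ⟨i, a⟩ ⟨j, b⟩ ⟨rfl, hab⟩
    have hadj := (hwN i).1
    fin_cases a <;> fin_cases b <;> simp_all [SimpleGraph.adj_comm]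
  · rintro ⟨i, a⟩ ⟨j, b⟩ hab
    fin_cases a <;> fin_cases b <;> simp_all [hv.eq_iff, hw.eq_iff]
    · exact hvw j i hab.symm

theorem exists_injective_mem_of_embedsIn_matching {V : Type*} {G : SimpleGraph V} {n : ℕ}
    {S : Set V} (hS : ∀ x y, G.Adj x y → x ∈ S ∨ y ∈ S) (h : EmbedsIn (Matching n) G) :
    ∃ v : Fin n → V, Injective v ∧ ∀ i, v i ∈ S := by
  obtain ⟨g, hg⟩ := h
  have : ∀ i, ∃ a, g (i, a) ∈ S := fun i =>
    (hS _ _ (g.map_adj (show (Matching n).Adj (i, 0) (i, 1) by simp [Matching]))).elim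
      (⟨0, ·⟩) (⟨1, ·⟩)
  choose a ha using this
  exact ⟨fun i => g (i, a i), fun i j hij => congrArg Prod.fst (hg hij), ha⟩

theorem neighborSet_eq_union_colorSubgraph {V : Type*} (F : SimpleGraph V) (c : Sym2 V → Bool)
    (v : V) : F.neighborSet v =
      (colorSubgraph F c true).neighborSet v ∪ (colorSubgraph F c false).neighborSet v := by
  ext w
  cases h : c s(v, w) <;> simp [colorSubgraph, h]

theorem arrows_infStar_matching_iff {V : Type*} {F : SimpleGraph V} {n : ℕ} :
    Arrows F InfStar (Matching n) ↔
      ∃ v : Fin n → V, Injective v ∧ ∀ i, (F.neighborSet (v i)).Infinite := by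
  constructor
  · intro h
    classical
    rcases h fun e => decide (∀ x ∈ e, (F.neighborSet x).Finite) with hred | hblue
    · exfalso
      obtain ⟨v, hv⟩ := embedsIn_infStar_iff.mp hred
      obtain ⟨w, -, hc⟩ := hv.nonempty
      have hfin : (F.neighborSet v).Finite := of_decide_eq_true hc v (Sym2.mem_mk_left v w)
      exact hv (hfin.subset fun u hu => hu.1)
    · refine exists_injective_mem_of_embedsIn_matching (S := {x | (F.neighborSet x).Infinite})
        (fun x y hxy => ?_) hblue
      by_contra! hfin
      refine Bool.false_ne_true (hxy.2.symm.trans (decide_eq_true fun z hz => ?_))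
      rcases Sym2.mem_iff.mp hz with rfl | rfl
      exacts [Set.not_infinite.mp hfin.1, Set.not_infinite.mp hfin.2]
  · rintro ⟨v, hv, hinf⟩ c
    by_cases hred : ∃ i, ((colorSubgraph F c true).neighborSet (v i)).Infinite
    · obtain ⟨i, hi⟩ := hred
      exact .inl (embedsIn_infStar_iff.mpr ⟨v i, hi⟩)
    · refine .inr (embedsIn_matching_of_neighborSet_infinite v hv fun i => ?_)
      have hi := hinf i
      rw [neighborSet_eq_union_colorSubgraph F c, Set.infinite_union] at hi
      exact hi.resolve_left fun h => hred ⟨i, h⟩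

theorem SimpleGraph.neighborSet_deleteEdges_infinite {V : Type*} {G : SimpleGraph V} {v : V}
    {s : Set (Sym2 V)} (hs : s.Finite) (hv : (G.neighborSet v).Infinite) :
    ((G.deleteEdges s).neighborSet v).Infinite := by
  have hfin : {w | s(v, w) ∈ s}.Finite :=
    hs.preimage fun _ _ _ _ h => Sym2.congr_right.mp h
  exact (hv.sdiff hfin).mono fun _ hw => (deleteEdges_adj ..).mpr hw

theorem SimpleGraph.deleteEdges_singleton_lt {V : Type*} {G : SimpleGraph V} {u v : V}
    (h : G.Adj u v) : G.deleteEdges {s(u, v)} < G :=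
  (G.deleteEdges_le _).lt_of_ne fun heq => by rw [← heq] at h; simp at h

theorem stmt19_general (n : ℕ) (hn : 1 ≤ n) (W : Type) (F : SimpleGraph W) :
    ¬ RamseyMinimal F InfStar (Matching n) := by
  rintro ⟨hF, hmin⟩
  obtain ⟨v, hv, hinf⟩ := arrows_infStar_matching_iff.mp hF
  obtain ⟨u, hu⟩ := (hinf ⟨0, hn⟩).nonempty
  refine hmin _ (F.deleteEdges_singleton_lt hu) (arrows_infStar_matching_iff.mpr ⟨v, hv, ?_⟩)
  exact fun i => neighborSet_deleteEdges_infinite (Set.finite_singleton _) (hinf i)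

/-- For every `n ≥ 1` there is no `(S_∞, nK₂)`-minimal graph. -/
theorem stmt19 (n : ℕ) (hn : 1 ≤ n) (W : Type) [Countable W] (F : SimpleGraph W) :
    ¬ RamseyMinimal F InfStar (Matching n) :=
  stmt19_general n hn W F
end
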